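/- Suppose along a trajectory of the Cartan horizontal system h₁(t) = h₂(t) = 0 for all t (abnormal case), with φ₁=φ₂=φ₃=0, φ₄ ≠ 0, φ₅ = 0, x(0)=y(0)=z(0)=v(0)=w(0)=0, and (u₁(t),u₂(t)) ≠ (0,0) a.e. Then x(t) ≡ 0, z(t) ≡ 0, v(t) ≡ 0, w(t) ≡ 0 and u₁(t) = 0 a.e.; so y(t) = ∫₀ᵗ u₂ dτ and the extremal lies on the one-parameter subgroup through Y. -/

import Mathlib

/-!
With `φ₄` the only nonzero multiplier, the abnormal condition reads `h₂ = φ₄ x² / 2 = 0` and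
`h₁ = -φ₄ (x y / 2 + z) = 0`, so `x ≡ 0` and then `z ≡ 0`. Hence `u₁ = x' = 0` a.e., the right-hand
sides of the `v`- and `w`-equations vanish a.e., and the fundamental theorem of calculus for
Lipschitz (hence absolutely continuous) functions integrates the remaining equations.
-/

open MeasureTheory intervalIntegral

theorem AbsolutelyContinuousOnInterval.integral_eq_sub_of_ae_hasDerivAt {f f' : ℝ → ℝ} {a b : ℝ}
    (hf : AbsolutelyContinuousOnInterval f a b)
    (hderiv : ∀ᵐ t, t ∈ Set.uIcc a b → HasDerivAt f (f' t) t) :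
    ∫ t in a..b, f' t = f b - f a := by
  rw [← hf.integral_deriv_eq_sub]
  refine integral_congr_ae ?_
  filter_upwards [hderiv] with t ht hmem
  exact (ht (Set.uIoc_subset_uIcc hmem)).deriv.symm

theorem LipschitzWith.integral_eq_sub_of_ae_hasDerivAt {f f' : ℝ → ℝ} {K : NNReal}
    (hf : LipschitzWith K f) (hderiv : ∀ᵐ t, HasDerivAt f (f' t) t) (a b : ℝ) :
    ∫ t in a..b, f' t = f b - f a :=
  (hf.lipschitzOnWith (s := Set.uIcc a b)).absolutelyContinuousOnInterval
    |>.integral_eq_sub_of_ae_hasDerivAt (hderiv.mono fun _ ht _ => ht)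

theorem LipschitzWith.eq_zero_of_ae_hasDerivAt_zero {f : ℝ → ℝ} {K : NNReal}
    (hf : LipschitzWith K f) (h0 : f 0 = 0) (hderiv : ∀ᵐ t, HasDerivAt f 0 t) (t : ℝ) :
    f t = 0 := by
  have := hf.integral_eq_sub_of_ae_hasDerivAt (f' := fun _ => 0) hderiv 0 t
  simp_all

theorem cartan_abnormal_case_general
    (u₁ u₂ x y z v w : ℝ → ℝ) (φ₁ φ₂ φ₃ φ₄ φ₅ : ℝ)
    (hy : ∃ K, LipschitzWith K y)
    (hv : ∃ K, LipschitzWith K v)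
    (hw : ∃ K, LipschitzWith K w)
    (hy0 : y 0 = 0) (hv0 : v 0 = 0) (hw0 : w 0 = 0)
    (hx' : ∀ᵐ t ∂(volume : Measure ℝ), HasDerivAt x (u₁ t) t)
    (hy' : ∀ᵐ t ∂(volume : Measure ℝ), HasDerivAt y (u₂ t) t)
    (hv' : ∀ᵐ t ∂(volume : Measure ℝ),
      HasDerivAt v (-(z t + x t * y t / 6) * u₁ t / 2 + x t ^ 2 / 12 * u₂ t) t)
    (hw' : ∀ᵐ t ∂(volume : Measure ℝ),
      HasDerivAt w (-(y t ^ 2 / 12) * u₁ t - (z t - x t * y t / 6) * u₂ t / 2) t)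
    (hφ₁ : φ₁ = 0) (hφ₂ : φ₂ = 0) (hφ₃ : φ₃ = 0) (hφ₄ : φ₄ ≠ 0) (hφ₅ : φ₅ = 0)
    (habn₁ : ∀ t, φ₁ - (φ₃ + φ₄ * x t / 2 + φ₅ * y t / 2) * y t - φ₄ * z t = 0)
    (habn₂ : ∀ t, φ₂ + (φ₃ + φ₄ * x t / 2 + φ₅ * y t / 2) * x t - φ₅ * z t = 0) :
    (∀ t, x t = 0) ∧ (∀ t, z t = 0) ∧ (∀ t, v t = 0) ∧ (∀ t, w t = 0) ∧
    (∀ᵐ t ∂(volume : Measure ℝ), u₁ t = 0) ∧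
    (∀ t, y t = ∫ τ in (0:ℝ)..t, u₂ τ) := by
  subst hφ₁ hφ₂ hφ₃ hφ₅
  have hX : ∀ t, x t = 0 := fun t => by
    have : φ₄ * x t ^ 2 = 0 := by linear_combination 2 * habn₂ t
    simpa [hφ₄] using this
  have hZ : ∀ t, z t = 0 := fun t => by
    have : φ₄ * z t = 0 := by linear_combination -habn₁ t - φ₄ * y t / 2 * hX t
    simpa [hφ₄] using this
  have hU₁ : ∀ᵐ t, u₁ t = 0 := by
    filter_upwards [hx'] with t ht
    exact ht.unique ((funext hX : x = 0) ▸ hasDerivAt_const t 0)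
  have hV : ∀ t, v t = 0 := by
    obtain ⟨K, hK⟩ := hv
    refine hK.eq_zero_of_ae_hasDerivAt_zero hv0 ?_
    filter_upwards [hv'] with t ht
    simpa [hX t, hZ t] using ht
  have hW : ∀ t, w t = 0 := by
    obtain ⟨K, hK⟩ := hw
    refine hK.eq_zero_of_ae_hasDerivAt_zero hw0 ?_
    filter_upwards [hw', hU₁] with t ht hu₁
    simpa [hX t, hZ t, hu₁] using ht
  have hY : ∀ t, y t = ∫ τ in (0:ℝ)..t, u₂ τ := fun t => by
    obtain ⟨K, hK⟩ := hy
    simp [hK.integral_eq_sub_of_ae_hasDerivAt hy' 0 t, hy0]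
  exact ⟨hX, hZ, hV, hW, hU₁, hY⟩

theorem cartan_abnormal_case
    (u₁ u₂ x y z v w : ℝ → ℝ) (φ₁ φ₂ φ₃ φ₄ φ₅ : ℝ)
    (hu₁m : Measurable u₁) (hu₂m : Measurable u₂)
    (hu₁b : ∃ C, ∀ t, |u₁ t| ≤ C) (hu₂b : ∃ C, ∀ t, |u₂ t| ≤ C)
    (hx : ∃ K, LipschitzWith K x) (hy : ∃ K, LipschitzWith K y)
    (hz : ∃ K, LipschitzWith K z) (hv : ∃ K, LipschitzWith K v)
    (hw : ∃ K, LipschitzWith K w)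
    (hx0 : x 0 = 0) (hy0 : y 0 = 0) (hz0 : z 0 = 0) (hv0 : v 0 = 0) (hw0 : w 0 = 0)
    (hx' : ∀ᵐ t ∂(volume : Measure ℝ), HasDerivAt x (u₁ t) t)
    (hy' : ∀ᵐ t ∂(volume : Measure ℝ), HasDerivAt y (u₂ t) t)
    (hz' : ∀ᵐ t ∂(volume : Measure ℝ),
      HasDerivAt z ((x t * u₂ t - y t * u₁ t) / 2) t)
    (hv' : ∀ᵐ t ∂(volume : Measure ℝ),
      HasDerivAt v (-(z t + x t * y t / 6) * u₁ t / 2 + x t ^ 2 / 12 * u₂ t) t)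
    (hw' : ∀ᵐ t ∂(volume : Measure ℝ),
      HasDerivAt w (-(y t ^ 2 / 12) * u₁ t - (z t - x t * y t / 6) * u₂ t / 2) t)
    (hφ₁ : φ₁ = 0) (hφ₂ : φ₂ = 0) (hφ₃ : φ₃ = 0) (hφ₄ : φ₄ ≠ 0) (hφ₅ : φ₅ = 0)
    (habn₁ : ∀ t, φ₁ - (φ₃ + φ₄ * x t / 2 + φ₅ * y t / 2) * y t - φ₄ * z t = 0)
    (habn₂ : ∀ t, φ₂ + (φ₃ + φ₄ * x t / 2 + φ₅ * y t / 2) * x t - φ₅ * z t = 0)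
    (hu : ∀ᵐ t ∂(volume : Measure ℝ), (u₁ t, u₂ t) ≠ (0, 0)) :
    (∀ t, x t = 0) ∧ (∀ t, z t = 0) ∧ (∀ t, v t = 0) ∧ (∀ t, w t = 0) ∧
    (∀ᵐ t ∂(volume : Measure ℝ), u₁ t = 0) ∧
    (∀ t, y t = ∫ τ in (0:ℝ)..t, u₂ τ) :=
  cartan_abnormal_case_general u₁ u₂ x y z v w φ₁ φ₂ φ₃ φ₄ φ₅ hy hv hw hy0 hv0 hw0 hx' hy' hv' hw'
    hφ₁ hφ₂ hφ₃ hφ₄ hφ₅ habn₁ habn₂
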